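/- arXiv:1604.03063 — 2 statements merged into one kernel-verified Lean document; each statement's English description precedes it below -/
import Mathlib

section
/- Let D=(V,A) be a finite transitive loopless digraph, and let 𝐷̲ = (V, set A) denote the undirected graph obtained from D by forgetting orientations. Then the chromatic polynomial of 𝐷̲ satisfies χ_{𝐷̲} = Σ_{F ⊆ A, the digraph (V,F) is 2-path-free} (−1)^{|F|} x^{conn(V, set F)} in ℤ[x]. -/
open scoped Classical

noncomputable section

set_option linter.unusedSectionVars false
set_option maxHeartbeats 1000000

/-- A coloring `f` of the graph `(V, E)` is proper if the endpoints of each edge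
receive distinct colors. -/
def IsProperColoring {V Y : Type*} (E : Finset (Sym2 V)) (f : V → Y) : Prop :=
  ∀ u w : V, s(u, w) ∈ E → f u ≠ f w

/-- `conn (V, F)`: the number of connected components of the graph `(V, F)`. -/
def numComponents {V : Type*} (F : Finset (Sym2 V)) : ℕ :=
  Nat.card (SimpleGraph.fromEdgeSet (↑F : Set (Sym2 V))).ConnectedComponent

/-- `set F`: the set of 2-element sets `{v, w}` for the arcs `(v, w) ∈ F` of a
loopless digraph. -/
def arcEdges {V : Type*} [DecidableEq V] (F : Finset (V × V)) : Finset (Sym2 V) :=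
  F.image fun p => s(p.1, p.2)

/-- A digraph `(V, F)` is 2-path-free if there exist no `u, v, w ∈ V` with
`(u, v) ∈ F` and `(v, w) ∈ F`. -/
def TwoPathFree {V : Type*} (F : Finset (V × V)) : Prop :=
  ¬ ∃ u v w : V, (u, v) ∈ F ∧ (v, w) ∈ F

section Aux
variable {V : Type*} [Fintype V] [DecidableEq V]

lemma reachable_of_arc {F : Finset (V × V)} {u v : V} (h : (u, v) ∈ F) :
    (SimpleGraph.fromEdgeSet (↑(arcEdges F) : Set (Sym2 V))).Reachable u v := by
  by_cases huv : u = v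
  · subst huv; rfl
  · exact SimpleGraph.Adj.reachable (by
      rw [SimpleGraph.fromEdgeSet_adj]
      exact ⟨Finset.mem_coe.mpr (Finset.mem_image_of_mem _ h), huv⟩)

lemma mono_of_reachable {F : Finset (V × V)} {q : ℕ} {f : V → Fin q}
    (hf : ∀ p ∈ F, f p.1 = f p.2) {u v : V}
    (h : (SimpleGraph.fromEdgeSet (↑(arcEdges F) : Set (Sym2 V))).Reachable u v) :
    f u = f v := by
  have hadj : ∀ a b : V,
      (SimpleGraph.fromEdgeSet (↑(arcEdges F) : Set (Sym2 V))).Adj a b → f a = f b := by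
    intro a b hab
    rw [SimpleGraph.fromEdgeSet_adj] at hab
    obtain ⟨p, hp, hpe⟩ := Finset.mem_image.mp (Finset.mem_coe.mp hab.1)
    rw [Sym2.eq_iff] at hpe
    rcases hpe with ⟨h1, h2⟩ | ⟨h1, h2⟩
    · rw [← h1, ← h2]; exact hf p hp
    · rw [← h1, ← h2]; exact (hf p hp).symm
  obtain ⟨w⟩ := h
  induction w with
  | nil => rfl
  | cons h p ih => exact (hadj _ _ h).trans ih

lemma card_mono (q : ℕ) (F : Finset (V × V)) :
    Nat.card {f : V → Fin q // ∀ p ∈ F, f p.1 = f p.2}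
      = q ^ numComponents (arcEdges F) := by
  set G := SimpleGraph.fromEdgeSet (↑(arcEdges F) : Set (Sym2 V)) with hG
  have e : {f : V → Fin q // ∀ p ∈ F, f p.1 = f p.2} ≃ (G.ConnectedComponent → Fin q) :=
    { toFun := fun f => SimpleGraph.ConnectedComponent.lift f.1
        (fun v w p _ => mono_of_reachable f.2 ⟨p⟩)
      invFun := fun g => ⟨fun v => g (G.connectedComponentMk v), by
        intro p hp
        simp only []
        congr 1
        exact (SimpleGraph.ConnectedComponent.eq).mpr (reachable_of_arc hp)⟩
      left_inv := fun f => Subtype.ext rfl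
      right_inv := fun g => by
        funext c
        refine SimpleGraph.ConnectedComponent.ind (fun v => ?_) c
        rfl }
  rw [Nat.card_congr e, Nat.card_fun, Nat.card_eq_fintype_card (α := Fin q), Fintype.card_fin]
  rfl

lemma numComponents_insert {s : Finset (Sym2 V)} {u w : V}
    (h : (SimpleGraph.fromEdgeSet (↑s : Set (Sym2 V))).Reachable u w) :
    numComponents (insert s(u, w) s) = numComponents s := by
  set G := SimpleGraph.fromEdgeSet (↑s : Set (Sym2 V)) with hG
  set G' := SimpleGraph.fromEdgeSet (↑(insert s(u, w) s) : Set (Sym2 V)) with hG'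
  have hle : G ≤ G' := by
    apply SimpleGraph.fromEdgeSet_mono
    rw [Finset.coe_insert]
    exact Set.subset_insert _ _
  have back : ∀ a b : V, G'.Reachable a b → G.Reachable a b := by
    have hadj : ∀ a b : V, G'.Adj a b → G.Reachable a b := by
      intro a b hab
      rw [hG', SimpleGraph.fromEdgeSet_adj, Finset.coe_insert, Set.mem_insert_iff] at hab
      rcases hab.1 with h1 | h1
      · rw [Sym2.eq_iff] at h1
        rcases h1 with ⟨rfl, rfl⟩ | ⟨rfl, rfl⟩
        · exact h
        · exact h.symm
      · exact SimpleGraph.Adj.reachable (by rw [hG, SimpleGraph.fromEdgeSet_adj]; exact ⟨h1, hab.2⟩)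
    intro a b hab
    obtain ⟨p⟩ := hab
    induction p with
    | nil => rfl
    | cons ha p ih => exact (hadj _ _ ha).trans ih
  have e : G'.ConnectedComponent ≃ G.ConnectedComponent :=
    { toFun := SimpleGraph.ConnectedComponent.lift (G := G') G.connectedComponentMk
        (fun v w p _ => (SimpleGraph.ConnectedComponent.eq).mpr (back _ _ ⟨p⟩))
      invFun := SimpleGraph.ConnectedComponent.lift (G := G) G'.connectedComponentMk
        (fun v w p _ => (SimpleGraph.ConnectedComponent.eq).mpr ((SimpleGraph.Reachable.mono hle) ⟨p⟩))
      left_inv := fun c => by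
        refine SimpleGraph.ConnectedComponent.ind (fun v => ?_) c
        rfl
      right_inv := fun c => by
        refine SimpleGraph.ConnectedComponent.ind (fun v => ?_) c
        rfl }
  exact Nat.card_congr e

lemma whitney (A : Finset (V × V)) (q : ℕ) :
    ((Nat.card {f : V → Fin q // IsProperColoring (arcEdges A) f} : ℤ))
      = ∑ F ∈ A.powerset, (-1 : ℤ) ^ F.card * (q : ℤ) ^ numComponents (arcEdges F) := by
  have hsub : ∀ (P : (V → Fin q) → Prop), (Nat.card {f : V → Fin q // P f} : ℤ)
      = ∑ f : V → Fin q, if P f then (1 : ℤ) else 0 := by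
    intro P
    rw [Nat.card_eq_fintype_card, Fintype.card_subtype, Finset.sum_boole]
  calc (Nat.card {f : V → Fin q // IsProperColoring (arcEdges A) f} : ℤ)
      = ∑ f : V → Fin q, if IsProperColoring (arcEdges A) f then (1 : ℤ) else 0 := hsub _
    _ = ∑ f : V → Fin q, ∑ F ∈ A.powerset, (-1 : ℤ) ^ F.card *
          (if ∀ p ∈ F, f p.1 = f p.2 then (1 : ℤ) else 0) := by
        refine Finset.sum_congr rfl fun f _ => ?_
        have hiff : (A.filter (fun p => f p.1 = f p.2) = ∅) ↔
            IsProperColoring (arcEdges A) f := by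
          rw [Finset.filter_eq_empty_iff]
          constructor
          · intro h u w hm
            obtain ⟨p, hp, hpe⟩ := Finset.mem_image.mp hm
            rw [Sym2.eq_iff] at hpe
            rcases hpe with ⟨h1, h2⟩ | ⟨h1, h2⟩
            · rw [← h1, ← h2]; exact h hp
            · rw [← h1, ← h2]; exact fun hc => (h hp) hc.symm
          · intro h p hp
            exact h p.1 p.2 (Finset.mem_image_of_mem _ hp)
        have h1 : A.powerset.filter (fun F => ∀ p ∈ F, f p.1 = f p.2)
            = (A.filter (fun p => f p.1 = f p.2)).powerset := by
          ext F
          simp only [Finset.mem_filter, Finset.mem_powerset, Finset.subset_iff,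
            Finset.mem_filter]
          constructor
          · rintro ⟨h1, h2⟩ x hx
            exact ⟨h1 hx, h2 x hx⟩
          · intro h
            exact ⟨fun x hx => (h hx).1, fun x hx => (h hx).2⟩
        calc (if IsProperColoring (arcEdges A) f then (1 : ℤ) else 0)
            = if A.filter (fun p => f p.1 = f p.2) = ∅ then (1 : ℤ) else 0 := by
              rw [if_congr hiff rfl rfl]
          _ = ∑ F ∈ (A.filter (fun p => f p.1 = f p.2)).powerset, (-1 : ℤ) ^ F.card :=
              Finset.sum_powerset_neg_one_pow_card.symm
          _ = ∑ F ∈ A.powerset.filter (fun F => ∀ p ∈ F, f p.1 = f p.2), (-1 : ℤ) ^ F.card := by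
              rw [h1]
          _ = ∑ F ∈ A.powerset, (if ∀ p ∈ F, f p.1 = f p.2 then (-1 : ℤ) ^ F.card else 0) :=
              Finset.sum_filter _ _
          _ = ∑ F ∈ A.powerset, (-1 : ℤ) ^ F.card *
                (if ∀ p ∈ F, f p.1 = f p.2 then (1 : ℤ) else 0) := by
              refine Finset.sum_congr rfl fun F _ => ?_
              split <;> simp
    _ = ∑ F ∈ A.powerset, (-1 : ℤ) ^ F.card * (q : ℤ) ^ numComponents (arcEdges F) := by
        rw [Finset.sum_comm]
        refine Finset.sum_congr rfl fun F hF => ?_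
        rw [← Finset.mul_sum]
        congr 1
        have h := hsub (fun f => ∀ p ∈ F, f p.1 = f p.2)
        rw [card_mono q F] at h
        rw [show ((q : ℤ) ^ numComponents (arcEdges F))
            = ((q ^ numComponents (arcEdges F) : ℕ) : ℤ) by push_cast; rfl]
        convert h.symm using 2 with f _
        split <;> rfl

lemma badSum (A : Finset (V × V))
    (hloop : ∀ v : V, (v, v) ∉ A)
    (htrans : ∀ u v w : V, (u, v) ∈ A → (v, w) ∈ A → (u, w) ∈ A) :
    ∑ F ∈ A.powerset.filter (fun F => ¬ TwoPathFree F),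
        (-1 : Polynomial ℤ) ^ F.card * Polynomial.X ^ numComponents (arcEdges F) = 0 := by
  -- basic facts
  have hnl : ∀ p : V × V, p ∈ A → p.1 ≠ p.2 := by
    intro p hp h
    exact hloop p.1 (by rwa [show p = (p.1, p.1) from Prod.ext rfl h.symm] at hp)
  -- interval length
  set ℓ : V × V → ℕ := fun a =>
    ((Finset.univ.filter fun z => (a.1, z) ∈ A ∧ (z, a.2) ∈ A)).card with hℓ
  have hgrow1 : ∀ u v w : V, (u, v) ∈ A → (v, w) ∈ A → ℓ (u, v) < ℓ (u, w) := by
    intro u v w h1 h2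
    apply Finset.card_lt_card
    refine (Finset.ssubset_iff_of_subset ?_).mpr ?_
    · intro z hz
      obtain ⟨-, hz1, hz2⟩ := Finset.mem_filter.mp hz
      exact Finset.mem_filter.mpr ⟨Finset.mem_univ z, hz1, htrans _ _ _ hz2 h2⟩
    · refine ⟨v, Finset.mem_filter.mpr ⟨Finset.mem_univ v, h1, h2⟩, fun hc => ?_⟩
      exact hloop v (Finset.mem_filter.mp hc).2.2
  have hgrow2 : ∀ u v w : V, (u, v) ∈ A → (v, w) ∈ A → ℓ (v, w) < ℓ (u, w) := by
    intro u v w h1 h2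
    apply Finset.card_lt_card
    refine (Finset.ssubset_iff_of_subset ?_).mpr ?_
    · intro z hz
      obtain ⟨-, hz1, hz2⟩ := Finset.mem_filter.mp hz
      exact Finset.mem_filter.mpr ⟨Finset.mem_univ z, htrans _ _ _ h1 hz1, hz2⟩
    · refine ⟨v, Finset.mem_filter.mpr ⟨Finset.mem_univ v, h1, h2⟩, fun hc => ?_⟩
      exact hloop v (Finset.mem_filter.mp hc).2.1
  -- the key function
  set N : ℕ := Fintype.card (V × V) with hN
  set enc : V × V → ℕ := fun a => (Fintype.equivFin (V × V) a : ℕ) with henc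
  have henclt : ∀ a, enc a < N := fun a => (Fintype.equivFin (V × V) a).is_lt
  set k : V × V → ℕ := fun a => ℓ a * N + enc a with hk
  have kinj : Function.Injective k := by
    intro a b hab
    have h2 : (ℓ a * N + enc a) % N = (ℓ b * N + enc b) % N := by
      show k a % N = k b % N
      rw [hab]
    rw [Nat.add_comm (ℓ a * N), Nat.add_comm (ℓ b * N), Nat.add_mul_mod_self_right,
      Nat.add_mul_mod_self_right, Nat.mod_eq_of_lt (henclt a),
      Nat.mod_eq_of_lt (henclt b)] at h2
    exact (Fintype.equivFin (V × V)).injective (Fin.ext h2)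
  have klt : ∀ a b : V × V, ℓ a < ℓ b → k a < k b := by
    intro a b h
    show ℓ a * N + enc a < ℓ b * N + enc b
    calc ℓ a * N + enc a < ℓ a * N + N := Nat.add_lt_add_left (henclt a) _
      _ = (ℓ a + 1) * N := by ring
      _ ≤ ℓ b * N := Nat.mul_le_mul_right N (Nat.succ_le_of_lt h)
      _ ≤ ℓ b * N + enc b := Nat.le_add_right _ _
  letI : LinearOrder (V × V) := LinearOrder.lift' k kinj
  have hlt_iff : ∀ a b : V × V, a < b ↔ k a < k b := fun a b => Iff.rfl
  set I : Finset (V × V) → Finset (V × V) :=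
    fun F => A.filter (fun a => ∃ v, (a.1, v) ∈ F ∧ (v, a.2) ∈ F) with hI
  have I_nonempty : ∀ F : Finset (V × V), F ⊆ A → ¬ TwoPathFree F → (I F).Nonempty := by
    intro F hFA hF
    obtain ⟨u, v, w, h1, h2⟩ := not_not.mp hF
    exact ⟨(u, w), Finset.mem_filter.mpr ⟨htrans u v w (hFA h1) (hFA h2), v, h1, h2⟩⟩
  set toggle : Finset (V × V) → (V × V) → Finset (V × V) :=
    fun F e => if e ∈ F then F.erase e else insert e F with htog
  have toggle_mem : ∀ F e x, x ∈ toggle F e ↔ ((x ∈ F ∧ x ≠ e) ∨ (x = e ∧ e ∉ F)) := by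
    intro F e x
    rw [htog]
    by_cases he : e ∈ F <;> by_cases hx : x = e <;>
      simp [he, hx, Finset.mem_erase, Finset.mem_insert]
  have toggle_subset : ∀ F, F ⊆ A → ∀ e, e ∈ A → toggle F e ⊆ A := by
    intro F hFA e heA x hxm
    rcases (toggle_mem F e x).mp hxm with ⟨h, -⟩ | ⟨rfl, -⟩
    exacts [hFA h, heA]
  have toggle_hx : ∀ F e, ∀ x : V × V, x ≠ e → (x ∈ F ↔ x ∈ toggle F e) := by
    intro F e x hxe
    rw [toggle_mem]
    constructor
    · exact fun h => Or.inl ⟨h, hxe⟩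
    · rintro (⟨h, -⟩ | ⟨rfl, -⟩)
      · exact h
      · exact absurd rfl hxe
  have witness_ne : ∀ F, F ⊆ A → ∀ a ∈ I F,
      ∃ v, (a.1, v) ∈ F ∧ (v, a.2) ∈ F ∧ (a.1, v) ≠ a ∧ (v, a.2) ≠ a := by
    intro F hFA a ha
    obtain ⟨haA, v, h1, h2⟩ := Finset.mem_filter.mp ha
    refine ⟨v, h1, h2, fun hc => ?_, fun hc => ?_⟩
    · have hv : v = a.2 := congrArg Prod.snd hc
      rw [hv] at h2
      exact hloop a.2 (hFA h2)
    · have hv : v = a.1 := congrArg Prod.fst hc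
      rw [hv] at h1
      exact hloop a.1 (hFA h1)
  have stable : ∀ (F₁ F₂ : Finset (V × V)), F₁ ⊆ A → ∀ e : V × V, e ∈ A →
      (∀ x : V × V, x ≠ e → (x ∈ F₁ ↔ x ∈ F₂)) →
      ∀ b : V × V, ℓ b ≤ ℓ e → b ∈ I F₁ → b ∈ I F₂ := by
    intro F₁ F₂ h₁A e heA hx b hlb hb
    obtain ⟨hbA, v, h1, h2⟩ := Finset.mem_filter.mp hb
    by_cases hc1 : (b.1, v) = e
    · exfalso
      subst hc1
      have h' := hgrow1 b.1 v b.2 heA (h₁A h2)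
      rw [Prod.mk.eta] at h'
      omega
    · by_cases hc2 : (v, b.2) = e
      · exfalso
        subst hc2
        have h' := hgrow2 b.1 v b.2 (h₁A h1) heA
        rw [Prod.mk.eta] at h'
        omega
      · exact Finset.mem_filter.mpr ⟨hbA, v, (hx _ hc1).mp h1, (hx _ hc2).mp h2⟩
  have e_mem_toggle : ∀ F, F ⊆ A → ∀ (hne1 : (I F).Nonempty),
      (I F).min' hne1 ∈ I (toggle F ((I F).min' hne1)) := by
    intro F hFA hne1
    have heI : (I F).min' hne1 ∈ I F := Finset.min'_mem _ _
    obtain ⟨v, h1, h2, hw1, hw2⟩ := witness_ne F hFA _ heI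
    exact Finset.mem_filter.mpr ⟨(Finset.mem_filter.mp heI).1,
      v, (toggle_hx F _ _ hw1).mp h1, (toggle_hx F _ _ hw2).mp h2⟩
  have min'_toggle : ∀ F, F ⊆ A → ∀ (hne1 : (I F).Nonempty)
      (hne2 : (I (toggle F ((I F).min' hne1))).Nonempty),
      (I (toggle F ((I F).min' hne1))).min' hne2 = (I F).min' hne1 := by
    intro F hFA hne1 hne2
    set e := (I F).min' hne1 with he
    have heA : e ∈ A := (Finset.mem_filter.mp (Finset.min'_mem (I F) hne1)).1
    apply le_antisymm (Finset.min'_le _ _ (e_mem_toggle F hFA hne1))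
    apply Finset.le_min'
    intro b hb
    rcases le_or_gt (ℓ b) (ℓ e) with hle | hlt
    · exact Finset.min'_le _ _ (stable (toggle F e) F (toggle_subset F hFA e heA) e heA
        (fun x hx => (toggle_hx F e x hx).symm) b hle hb)
    · exact le_of_lt ((hlt_iff e b).mpr (klt e b hlt))
  have conn_toggle : ∀ F, F ⊆ A → ∀ (hne1 : (I F).Nonempty),
      numComponents (arcEdges (toggle F ((I F).min' hne1))) = numComponents (arcEdges F) := by
    intro F hFA hne1
    set e := (I F).min' hne1 with he
    have heI : e ∈ I F := Finset.min'_mem _ _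
    obtain ⟨v, h1, h2, hw1, hw2⟩ := witness_ne F hFA _ heI
    have himg : ∀ G : Finset (V × V), ∀ p : V × V,
        arcEdges (insert p G) = insert s(p.1, p.2) (arcEdges G) := by
      intro G p
      rw [arcEdges, arcEdges, Finset.image_insert]
    by_cases hef : e ∈ F
    · have h1' : (e.1, v) ∈ F.erase e := Finset.mem_erase.mpr ⟨hw1, h1⟩
      have h2' : (v, e.2) ∈ F.erase e := Finset.mem_erase.mpr ⟨hw2, h2⟩
      have hreach := (reachable_of_arc h1').trans (reachable_of_arc h2')
      have hF : arcEdges F = insert s(e.1, e.2) (arcEdges (F.erase e)) := by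
        conv_lhs => rw [← Finset.insert_erase hef]
        exact himg _ e
      rw [htog]
      simp only [if_pos hef]
      rw [hF, numComponents_insert hreach]
    · have hreach := (reachable_of_arc h1).trans (reachable_of_arc h2)
      rw [htog]
      simp only [if_neg hef]
      rw [himg F e, numComponents_insert hreach]
  -- the involution
  refine Finset.sum_involution
    (fun F hF => toggle F ((I F).min' (I_nonempty F
      (Finset.mem_powerset.mp (Finset.mem_filter.mp hF).1) (Finset.mem_filter.mp hF).2)))
    ?_ ?_ ?_ ?_
  · intro F hF
    have hFA : F ⊆ A := Finset.mem_powerset.mp (Finset.mem_filter.mp hF).1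
    have hne1 : (I F).Nonempty := I_nonempty F hFA (Finset.mem_filter.mp hF).2
    have H : ∀ (hx : (I F).Nonempty),
        (-1 : Polynomial ℤ) ^ F.card * Polynomial.X ^ numComponents (arcEdges F)
        + (-1 : Polynomial ℤ) ^ (toggle F ((I F).min' hx)).card
          * Polynomial.X ^ numComponents (arcEdges (toggle F ((I F).min' hx))) = 0 := by
      intro hx
      rw [conn_toggle F hFA hx]
      set e := (I F).min' hx with he
      by_cases hef : e ∈ F
      · have hcard : F.card = (toggle F e).card + 1 := by
          rw [htog]
          simp only [if_pos hef]
          rw [Finset.card_erase_of_mem hef]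
          have : 0 < F.card := Finset.card_pos.mpr ⟨e, hef⟩
          omega
        rw [hcard, pow_succ]
        ring
      · have hcard : (toggle F e).card = F.card + 1 := by
          rw [htog]
          simp only [if_neg hef]
          exact Finset.card_insert_of_notMem hef
        rw [hcard, pow_succ]
        ring
    exact H _
  · intro F hF _
    have hFA : F ⊆ A := Finset.mem_powerset.mp (Finset.mem_filter.mp hF).1
    have H : ∀ (hx : (I F).Nonempty), toggle F ((I F).min' hx) ≠ F := by
      intro hx hEq
      set e := (I F).min' hx with he
      by_cases hef : e ∈ F
      · have : e ∉ toggle F e := by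
          rw [htog]
          simp only [if_pos hef]
          exact Finset.notMem_erase e F
        rw [hEq] at this
        exact this hef
      · have : e ∈ toggle F e := by
          rw [htog]
          simp only [if_neg hef]
          exact Finset.mem_insert_self e F
        rw [hEq] at this
        exact hef this
    exact H _
  · intro F hF
    have hFA : F ⊆ A := Finset.mem_powerset.mp (Finset.mem_filter.mp hF).1
    have H : ∀ (hx : (I F).Nonempty),
        toggle F ((I F).min' hx) ∈ A.powerset.filter (fun F => ¬ TwoPathFree F) := by
      intro hx
      have heA : (I F).min' hx ∈ A := (Finset.mem_filter.mp (Finset.min'_mem (I F) hx)).1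
      refine Finset.mem_filter.mpr ⟨Finset.mem_powerset.mpr (toggle_subset F hFA _ heA), ?_⟩
      obtain ⟨-, v, h1, h2⟩ := Finset.mem_filter.mp (e_mem_toggle F hFA hx)
      exact fun h => h ⟨_, v, _, h1, h2⟩
    exact H _
  · intro F hF
    have hFA : F ⊆ A := Finset.mem_powerset.mp (Finset.mem_filter.mp hF).1
    have H : ∀ (hx : (I F).Nonempty)
        (hy : (I (toggle F ((I F).min' hx))).Nonempty),
        toggle (toggle F ((I F).min' hx)) ((I (toggle F ((I F).min' hx))).min' hy) = F := by
      intro hx hy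
      rw [min'_toggle F hFA hx hy]
      set e := (I F).min' hx with he
      by_cases hef : e ∈ F
      · simp only [htog]
        simp only [if_pos hef]
        have : e ∉ F.erase e := Finset.notMem_erase e F
        simp only [if_neg this]
        exact Finset.insert_erase hef
      · simp only [htog]
        simp only [if_neg hef]
        have : e ∈ insert e F := Finset.mem_insert_self e F
        simp only [if_pos this]
        exact Finset.erase_insert hef
    exact H _ _

end Aux

/-- Let `D = (V, A)` be a finite transitive loopless digraph, and let
`𝐷̲ = (V, set A)` be the undirected graph obtained by forgetting orientations. Then the
chromatic polynomial of `𝐷̲` (the unique `P ∈ ℤ[x]` with `P(q) = `(number of proper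
colorings `f : V → {1,…,q}` of `𝐷̲`) for all `q ∈ ℕ`) satisfies
`χ_{𝐷̲} = ∑_{F ⊆ A, (V,F) 2-path-free} (−1)^{|F|} x^{conn(V, set F)}` in `ℤ[x]`. -/
theorem chromaticPolynomial_of_transitive_digraph
    {V : Type*} [Fintype V] [DecidableEq V]
    (A : Finset (V × V))
    (hloop : ∀ v : V, (v, v) ∉ A)
    (htrans : ∀ u v w : V, (u, v) ∈ A → (v, w) ∈ A → (u, w) ∈ A)
    (P : Polynomial ℤ)
    (hP : ∀ q : ℕ,
      P.eval (q : ℤ) = Nat.card {f : V → Fin q // IsProperColoring (arcEdges A) f}) :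
    P = ∑ F ∈ A.powerset.filter (fun F => TwoPathFree F),
        (-1 : Polynomial ℤ) ^ F.card * Polynomial.X ^ numComponents (arcEdges F) := by
  set Q : Polynomial ℤ := ∑ F ∈ A.powerset,
      (-1 : Polynomial ℤ) ^ F.card * Polynomial.X ^ numComponents (arcEdges F) with hQ
  have heval : ∀ q : ℕ, P.eval (q : ℤ) = Q.eval (q : ℤ) := by
    intro q
    rw [hP q, whitney A q, hQ, Polynomial.eval_finset_sum]
    refine Finset.sum_congr rfl fun F _ => ?_
    simp
  have hPQ : P = Q := by
    apply Polynomial.eq_of_infinite_eval_eq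
    apply Set.infinite_of_injective_forall_mem (f := fun q : ℕ => (q : ℤ))
    · exact fun a b hab => Nat.cast_injective hab
    · exact fun q => heval q
  calc P = Q := hPQ
    _ = (∑ F ∈ A.powerset.filter (fun F => TwoPathFree F),
          (-1 : Polynomial ℤ) ^ F.card * Polynomial.X ^ numComponents (arcEdges F))
        + ∑ F ∈ A.powerset.filter (fun F => ¬ TwoPathFree F),
          (-1 : Polynomial ℤ) ^ F.card * Polynomial.X ^ numComponents (arcEdges F) :=
        (Finset.sum_filter_add_sum_filter_not _ _ _).symm
    _ = _ := by rw [badSum A hloop htrans, add_zero]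
end
end

section
/- Let M=(E,𝓘) be a matroid with m = r_M(E). Then χ̃_M = Σ_{F ⊆ E} (−1)^{|F|} x^{m − r_M(F)} in ℤ[x]. -/
open scoped Classical

noncomputable section

/-- The rank function of the matroid `(E, 𝓘)` (with ground set the whole type `α`):
`r_M(S) = max { |Z| : Z ∈ 𝓘, Z ⊆ S }`. -/
def mrank {α : Type*} [DecidableEq α] (𝓘 : Finset (Finset α)) (S : Finset α) : ℕ :=
  (𝓘.filter fun Z => Z ⊆ S).sup Finset.card

/-- `T` is a flat of the matroid `(E, 𝓘)`: for some `k`, the set `T` has rank `k` and is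
maximal (under inclusion) among subsets of the ground set of rank `k`. -/
def IsFlat {α : Type*} [DecidableEq α] (𝓘 : Finset (Finset α)) (T : Finset α) : Prop :=
  ∃ k, mrank 𝓘 T = k ∧ ∀ W : Finset α, mrank 𝓘 W = k → T ⊆ W → W = T

/-- `C` is a circuit of the matroid `(E, 𝓘)`: a minimal element of `𝒫(E) ∖ 𝓘`. -/
def IsCircuitM {α : Type*} (𝓘 : Finset (Finset α)) (C : Finset α) : Prop :=
  C ∉ 𝓘 ∧ ∀ D : Finset α, D ∉ 𝓘 → D ⊆ C → D = C

/-- The closure `T̄` of `T`: the intersection of all flats of the matroid containing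
`T`. -/
def mclosure {α : Type*} [Fintype α] [DecidableEq α] (𝓘 : Finset (Finset α))
    (T : Finset α) : Finset α :=
  Finset.univ.filter fun x => ∀ G : Finset α, IsFlat 𝓘 G → T ⊆ G → x ∈ G

/-- A broken circuit of the matroid `(E, 𝓘)` (with respect to the labeling function
`ℓ`): a set of the form `C \ {e}`, where `C` is a circuit of `M` and `e` is the unique
element of `C` attaining the maximum label among the elements of `C`. -/
def IsBrokenCircuitM {α X : Type*} [LinearOrder X] (𝓘 : Finset (Finset α))
    (ℓ : α → X) (K : Finset α) : Prop :=
  ∃ C e, IsCircuitM 𝓘 C ∧ e ∈ C ∧ (∀ e' ∈ C, e' ≠ e → ℓ e' < ℓ e) ∧ K = C.erase e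

/-! Realise `𝓘` as a Mathlib matroid `M`, so that `mrank`, `IsFlat` and `mclosure` become
`M.eRk`, `M.IsFlat` and `M.closure`. If `M` has a loop `e`, then adding or removing `e` preserves
rank and flips the sign, so the right-hand side vanishes. Otherwise `∅` is a flat; grouping the
subsets `S` by their closure, on which the rank is constant, the signed count
`∑_{cl S = G} (-1)^|S|` satisfies the Möbius recursion, because summed over the flats `Z ⊆ G` it
becomes `∑_{S ⊆ G} (-1)^|S| = [G = ∅]`. -/

open Finset

section Closure

variable {α : Type*} [Fintype α] [DecidableEq α] {𝓘 : Finset (Finset α)}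

theorem subset_mclosure (T : Finset α) : T ⊆ mclosure 𝓘 T :=
  fun _ hx ↦ mem_filter.2 ⟨mem_univ _, fun _ _ hTG ↦ hTG hx⟩

theorem mclosure_subset_of_isFlat {T G : Finset α} (hG : IsFlat 𝓘 G) (hTG : T ⊆ G) :
    mclosure 𝓘 T ⊆ G :=
  fun _ hx ↦ (mem_filter.1 hx).2 G hG hTG

end Closure

structure IsMatroidOf {α : Type*} (𝓘 : Finset (Finset α)) (M : Matroid α) : Prop where
  ground_eq : M.E = Set.univ
  indep_iff : ∀ I : Finset α, M.Indep I ↔ I ∈ 𝓘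

theorem exists_isMatroidOf {α : Type*} [DecidableEq α] {𝓘 : Finset (Finset α)} (h1 : ∅ ∈ 𝓘)
    (h2 : ∀ Y ∈ 𝓘, ∀ Z : Finset α, Z ⊆ Y → Z ∈ 𝓘)
    (h3 : ∀ Y ∈ 𝓘, ∀ Z ∈ 𝓘, Y.card < Z.card → ∃ x ∈ Z \ Y, insert x Y ∈ 𝓘) :
    ∃ M, IsMatroidOf 𝓘 M :=
  ⟨(IndepMatroid.ofFinset Set.univ (· ∈ 𝓘) h1 (fun _ _ hJ hIJ ↦ h2 _ hJ _ hIJ)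
      (fun I J hI hJ hlt ↦ by
        obtain ⟨x, hx, hxI⟩ := h3 I hI J hJ hlt
        exact ⟨x, (mem_sdiff.1 hx).1, (mem_sdiff.1 hx).2, hxI⟩)
      (fun _ _ ↦ Set.subset_univ _)).matroid,
    rfl, fun _ ↦ by simp⟩

namespace IsMatroidOf

variable {α : Type*} {𝓘 : Finset (Finset α)} {M : Matroid α}

theorem subset_ground (hM : IsMatroidOf 𝓘 M) (X : Set α) : X ⊆ M.E :=
  hM.ground_eq ▸ Set.subset_univ X

variable [DecidableEq α]

theorem mrank_eq_eRk [Finite α] (hM : IsMatroidOf 𝓘 M) (S : Finset α) :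
    (mrank 𝓘 S : ℕ∞) = M.eRk S := by
  refine le_antisymm ?_ (Matroid.eRk_le_iff.2 fun I hIS hI ↦ ?_)
  · obtain ⟨B, hB, hBS⟩ := exists_mem_eq_sup (𝓘.filter fun Z ↦ Z ⊆ S)
      ⟨∅, mem_filter.2 ⟨(hM.indep_iff ∅).1 (by simp), empty_subset S⟩⟩ card
    rw [mem_filter] at hB
    rw [mrank, hBS, ← Set.encard_coe_eq_coe_finsetCard]
    exact ((hM.indep_iff B).2 hB.1).encard_le_eRk_of_subset (by exact_mod_cast hB.2)
  · obtain ⟨J, rfl⟩ := (Set.toFinite I).exists_finset_coe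
    rw [Set.encard_coe_eq_coe_finsetCard, Nat.cast_le]
    exact le_sup (mem_filter.2 ⟨(hM.indep_iff J).1 hI, by exact_mod_cast hIS⟩)

theorem mrank_eq_mrank_iff [Finite α] (hM : IsMatroidOf 𝓘 M) {S T : Finset α} :
    mrank 𝓘 S = mrank 𝓘 T ↔ M.eRk S = M.eRk T := by
  rw [← hM.mrank_eq_eRk, ← hM.mrank_eq_eRk, Nat.cast_inj]

theorem isFlat_iff [Finite α] (hM : IsMatroidOf 𝓘 M) {G : Finset α} :
    IsFlat 𝓘 G ↔ M.IsFlat G := by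
  rw [Matroid.isFlat_iff_closure_eq]
  constructor
  · rintro ⟨_, rfl, hmax⟩
    obtain ⟨W, hW⟩ := (Set.toFinite (M.closure G)).exists_finset_coe
    have hGW : (G : Set α) ⊆ W := hW ▸ M.subset_closure _ (hM.subset_ground _)
    rw [← hW, hmax W (hM.mrank_eq_mrank_iff.2 (by rw [hW, M.eRk_closure_eq]))
      (by exact_mod_cast hGW)]
  · intro hG
    refine ⟨_, rfl, fun W hW hGW ↦ subset_antisymm ?_ hGW⟩
    have hcl : M.closure G = M.closure W :=
      (M.isRkFinite_of_finite G.finite_toSet).closure_eq_closure_of_subset_of_eRk_ge_eRk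
        (by exact_mod_cast hGW) (hM.mrank_eq_mrank_iff.1 hW).le
    rw [← coe_subset, ← hG, hcl]
    exact M.subset_closure _ (hM.subset_ground _)

variable [Fintype α]

theorem coe_mclosure (hM : IsMatroidOf 𝓘 M) (T : Finset α) :
    (mclosure 𝓘 T : Set α) = M.closure T := by
  ext x
  simp only [mclosure, coe_filter, mem_univ, true_and, Set.mem_ofPred_eq]
  constructor
  · intro hx
    obtain ⟨G, hG⟩ := (Set.toFinite (M.closure T)).exists_finset_coe
    exact hG ▸ hx G (hM.isFlat_iff.2 (hG ▸ M.isFlat_closure _))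
      (by exact_mod_cast hG ▸ M.subset_closure _ (hM.subset_ground _))
  · intro hx G hG hTG
    rw [← mem_coe, ← (hM.isFlat_iff.1 hG).closure]
    exact M.closure_mono (by exact_mod_cast hTG) hx

theorem isFlat_mclosure (hM : IsMatroidOf 𝓘 M) (T : Finset α) : IsFlat 𝓘 (mclosure 𝓘 T) :=
  hM.isFlat_iff.2 (hM.coe_mclosure T ▸ M.isFlat_closure _)

theorem mrank_mclosure (hM : IsMatroidOf 𝓘 M) (T : Finset α) :
    mrank 𝓘 (mclosure 𝓘 T) = mrank 𝓘 T :=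
  hM.mrank_eq_mrank_iff.2 (by rw [hM.coe_mclosure, M.eRk_closure_eq])

theorem mrank_insert_of_mem_mclosure (hM : IsMatroidOf 𝓘 M) {T S : Finset α} {e : α}
    (he : e ∈ mclosure 𝓘 T) (hTS : T ⊆ S) : mrank 𝓘 (insert e S) = mrank 𝓘 S := by
  rw [← mem_coe, hM.coe_mclosure] at he
  rw [hM.mrank_eq_mrank_iff, coe_insert, ← M.eRk_closure_eq,
    M.closure_insert_eq_of_mem_closure (M.closure_mono (coe_subset.2 hTS) he), M.eRk_closure_eq]

end IsMatroidOf

section Whitney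

variable {α : Type*} [Fintype α] [DecidableEq α] {𝓘 : Finset (Finset α)} {M : Matroid α}

theorem sum_isFlat_subset_sum_mclosure_eq (hM : IsMatroidOf 𝓘 M) {G : Finset α}
    (hG : IsFlat 𝓘 G) :
    ∑ Z ∈ univ.filter (fun Z ↦ IsFlat 𝓘 Z ∧ Z ⊆ G),
      ∑ S ∈ univ.filter (fun S ↦ mclosure 𝓘 S = Z), (-1 : ℤ) ^ #S =
      if G = ∅ then 1 else 0 := by
  rw [sum_fiberwise_eq_sum_filter, ← sum_powerset_neg_one_pow_card]
  congr 1
  ext S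
  simp only [mem_filter, mem_univ, true_and, mem_powerset]
  exact ⟨fun h ↦ (subset_mclosure S).trans h.2,
    fun h ↦ ⟨hM.isFlat_mclosure S, mclosure_subset_of_isFlat hG h⟩⟩

theorem sum_mclosure_eq_mobius (hM : IsMatroidOf 𝓘 M) (hloopless : IsFlat 𝓘 ∅)
    (μ : Finset α → Finset α → ℤ) (hμ1 : ∀ T : Finset α, IsFlat 𝓘 T → μ T T = 1)
    (hμ2 : ∀ T S : Finset α, IsFlat 𝓘 T → IsFlat 𝓘 S → T ⊂ S →
      μ T S = -∑ Z ∈ univ.filter (fun Z : Finset α => IsFlat 𝓘 Z ∧ T ⊆ Z ∧ Z ⊂ S), μ T Z)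
    {G : Finset α} (hG : IsFlat 𝓘 G) :
    ∑ S ∈ univ.filter (fun S ↦ mclosure 𝓘 S = G), (-1 : ℤ) ^ #S = μ ∅ G := by
  induction G using Finset.strongInduction with
  | H G ih =>
  have hsplit : univ.filter (fun Z ↦ IsFlat 𝓘 Z ∧ Z ⊆ G) =
      insert G (univ.filter fun Z ↦ IsFlat 𝓘 Z ∧ Z ⊂ G) := by
    ext Z
    simp only [mem_filter, mem_univ, true_and, mem_insert, subset_iff_ssubset_or_eq]
    aesop
  have hsum := sum_isFlat_subset_sum_mclosure_eq hM hG
  rw [hsplit, sum_insert (by simp),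
    sum_congr rfl fun Z hZ ↦ ih Z (mem_filter.1 hZ).2.2 (mem_filter.1 hZ).2.1] at hsum
  rcases eq_or_ne G ∅ with rfl | hne
  · simpa [hμ1 ∅ hloopless] using hsum
  · rw [hμ2 ∅ G hloopless hG (empty_ssubset.2 (nonempty_iff_ne_empty.2 hne))]
    simp only [empty_subset, true_and]
    rw [if_neg hne] at hsum
    linarith

end Whitney

section SignedRankSum

variable {α R : Type*} [Fintype α] [DecidableEq α] [Ring R] {𝓘 : Finset (Finset α)}
  {M : Matroid α}

theorem sum_neg_one_pow_mul_mrank_eq_sum_isFlat (hM : IsMatroidOf 𝓘 M)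
    (hloopless : IsFlat 𝓘 ∅) (μ : Finset α → Finset α → ℤ)
    (hμ1 : ∀ T : Finset α, IsFlat 𝓘 T → μ T T = 1)
    (hμ2 : ∀ T S : Finset α, IsFlat 𝓘 T → IsFlat 𝓘 S → T ⊂ S →
      μ T S = -∑ Z ∈ univ.filter (fun Z : Finset α => IsFlat 𝓘 Z ∧ T ⊆ Z ∧ Z ⊂ S), μ T Z)
    (g : ℕ → R) :
    ∑ F : Finset α, (-1 : R) ^ #F * g (mrank 𝓘 F) =
      ∑ F ∈ univ.filter (IsFlat 𝓘 ·), (μ ∅ F : R) * g (mrank 𝓘 F) := by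
  rw [← sum_fiberwise_of_maps_to (g := mclosure 𝓘) (t := univ.filter (IsFlat 𝓘 ·))
    fun S _ ↦ mem_filter.2 ⟨mem_univ _, hM.isFlat_mclosure S⟩]
  refine sum_congr rfl fun G hG ↦ ?_
  rw [← sum_mclosure_eq_mobius hM hloopless μ hμ1 hμ2 (mem_filter.1 hG).2]
  push_cast
  rw [sum_mul]
  refine sum_congr rfl fun S hS ↦ ?_
  rw [← (mem_filter.1 hS).2, hM.mrank_mclosure]

theorem sum_neg_one_pow_mul_mrank_eq_zero (hM : IsMatroidOf 𝓘 M) {e : α}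
    (he : e ∈ mclosure 𝓘 ∅) (g : ℕ → R) :
    ∑ F : Finset α, (-1 : R) ^ #F * g (mrank 𝓘 F) = 0 := by
  rw [← powerset_univ, ← insert_erase (mem_univ e), sum_powerset_insert (notMem_erase e _),
    ← sum_add_distrib]
  refine sum_eq_zero fun S hS ↦ ?_
  have heS : e ∉ S := fun h ↦ notMem_erase e univ (mem_powerset.1 hS h)
  rw [hM.mrank_insert_of_mem_mclosure he (empty_subset S), card_insert_of_notMem heS, pow_succ]
  noncomm_ring

end SignedRankSum

/-- Let `M = (E, 𝓘)` be a matroid (ground set the whole finite type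
`α`), with `m = r_M(E)`. Let `μ` be the Möbius function of the poset of flats of `M`
(characterized by `μ(x,x) = 1` and `∑_{x ≤ z ≤ y} μ(x,z) = 0` for flats `x < y`, i.e.
`μ(x,y) = −∑_{x ≤ z < y} μ(x,z)`). Then the polynomial
`χ̃_M = [∅̄ = ∅] · ∑_{F flat} μ(∅̄, F) x^{m − r_M(F)}` satisfies
`χ̃_M = ∑_{F ⊆ E} (−1)^{|F|} x^{m − r_M(F)}` in `ℤ[x]`. -/
theorem matroid_charPoly_eq_sum_powerset
    {α : Type*} [Fintype α] [DecidableEq α]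
    (𝓘 : Finset (Finset α))
    (h1 : ∅ ∈ 𝓘)
    (h2 : ∀ Y ∈ 𝓘, ∀ Z : Finset α, Z ⊆ Y → Z ∈ 𝓘)
    (h3 : ∀ Y ∈ 𝓘, ∀ Z ∈ 𝓘, Y.card < Z.card → ∃ x ∈ Z \ Y, insert x Y ∈ 𝓘)
    (μ : Finset α → Finset α → ℤ)
    (hμ1 : ∀ T : Finset α, IsFlat 𝓘 T → μ T T = 1)
    (hμ2 : ∀ T S : Finset α, IsFlat 𝓘 T → IsFlat 𝓘 S → T ⊂ S →
      μ T S = -∑ Z ∈ Finset.univ.filter (fun Z : Finset α => IsFlat 𝓘 Z ∧ T ⊆ Z ∧ Z ⊂ S),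
        μ T Z) :
    (if mclosure 𝓘 ∅ = (∅ : Finset α) then
        ∑ F ∈ Finset.univ.filter (fun F : Finset α => IsFlat 𝓘 F),
          Polynomial.C (μ (mclosure 𝓘 ∅) F) *
            Polynomial.X ^ (mrank 𝓘 Finset.univ - mrank 𝓘 F)
      else 0) =
      ∑ F : Finset α,
        (-1 : Polynomial ℤ) ^ F.card *
          Polynomial.X ^ (mrank 𝓘 Finset.univ - mrank 𝓘 F) := by
  obtain ⟨M, hM⟩ := exists_isMatroidOf h1 h2 h3
  split_ifs with hcl
  · rw [hcl]
    simp only [eq_intCast Polynomial.C]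
    exact (sum_neg_one_pow_mul_mrank_eq_sum_isFlat hM (hcl ▸ hM.isFlat_mclosure ∅) μ hμ1 hμ2
      fun k ↦ Polynomial.X ^ (mrank 𝓘 univ - k)).symm
  · obtain ⟨e, he⟩ := nonempty_iff_ne_empty.2 hcl
    exact (sum_neg_one_pow_mul_mrank_eq_zero hM he fun k ↦ Polynomial.X ^ (mrank 𝓘 univ - k)).symm
end
end
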